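/- If A is a summand-ideal of the pseudo MV-algebra M = Γ(G,u), then for each x ∈ M there exist unique elements a ∈ A and b ∈ A^⊥ such that x = a ⊕ b. -/

import Mathlib

variable {G : Type*} [Lattice G] [AddGroup G]
  [CovariantClass G G (· + ·) (· ≤ ·)]
  [CovariantClass G G (Function.swap (· + ·)) (· ≤ ·)]

/-- `u` is a strong unit of the lattice-ordered group `G`. -/
def IsStrongUnit (u : G) : Prop := 0 ≤ u ∧ ∀ x : G, ∃ n : ℕ, x ≤ n • u

/-- The operation `x ⊕ y := (x + y) ⊓ u` of the pseudo MV-algebra `Γ(G,u)`. -/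
def oplus (u x y : G) : G := (x + y) ⊓ u

/-- The operation `x ⊙ y := (x - u + y) ⊔ 0` of the pseudo MV-algebra `Γ(G,u)`. -/
def odot (u x y : G) : G := (x - u + y) ⊔ 0

/-- `n.x := x ⊕ ⋯ ⊕ x` (`n` summands), with `0.x = 0`. -/
def nOplus (u : G) : ℕ → G → G
  | 0, _ => 0
  | n + 1, x => oplus u (nOplus u n x) x

/-- `I` is an ideal of the pseudo MV-algebra with carrier `C ⊆ Γ(G,u)`:
a nonempty subset of `C`, downward closed within `C`, and closed under `⊕`. -/
def IsIdealIn (u : G) (C I : Set G) : Prop :=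
  I ⊆ C ∧ I.Nonempty ∧ (∀ x ∈ I, ∀ y ∈ C, y ≤ x → y ∈ I) ∧
    ∀ x ∈ I, ∀ y ∈ I, oplus u x y ∈ I

/-- `I` is a normal ideal: `x ⊕ I = I ⊕ x` for all `x ∈ C`. -/
def IsNormalIdealIn (u : G) (C I : Set G) : Prop :=
  IsIdealIn u C I ∧ ∀ x ∈ C, (fun i => oplus u x i) '' I = (fun i => oplus u i x) '' I

/-- `⟨X⟩_n`, the smallest normal ideal (of the carrier `C`) containing `X`. -/
def normalGenIn (u : G) (C X : Set G) : Set G :=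
  ⋂₀ {I | IsNormalIdealIn u C I ∧ X ⊆ I}

/-- The polar `X^⊥ = {y ∈ C : y ∧ x = 0 for all x ∈ X}` computed in carrier `C`. -/
def polarIn (C X : Set G) : Set G := {y ∈ C | ∀ x ∈ X, y ⊓ x = 0}

/-- `A ⊕ B := {a ⊕ b : a ∈ A, b ∈ B}`. -/
def setOplus (u : G) (A B : Set G) : Set G := Set.image2 (oplus u) A B

/-- `↓a` computed within the carrier `C`. -/
def dsetIn (C : Set G) (a : G) : Set G := {x ∈ C | x ≤ a}

/-- `I` is a summand-ideal of the carrier `C`: a normal ideal such that for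
some normal ideal `J`, `I ∩ J = {0}` and `⟨I ∪ J⟩_n = C`. -/
def IsSummandIdealIn (u : G) (C I : Set G) : Prop :=
  IsNormalIdealIn u C I ∧ ∃ J, IsNormalIdealIn u C J ∧ I ∩ J = {0} ∧
    normalGenIn u C (I ∪ J) = C

/-- `I` is a polar ideal of the carrier `C`: `I = I^⊥⊥`. -/
def IsPolarIdealIn (C I : Set G) : Prop := polarIn C (polarIn C I) = I

/-- `a` is a Boolean element of the carrier `C`: `a ∈ C` and `a ⊕ a = a`. -/
def IsBooleanIn (u : G) (C : Set G) (a : G) : Prop := a ∈ C ∧ oplus u a a = a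

/-- The carrier `C` is strongly projectable: every polar ideal is a summand-ideal. -/
def IsStronglyProjectableIn (u : G) (C : Set G) : Prop :=
  ∀ I : Set G, IsPolarIdealIn C I → IsSummandIdealIn u C I

/-- `N` is a subalgebra of `Γ(G,u)`: contains `0` and `u`, closed under `⊕`,
`x⁻ = u - x` and `x∼ = -x + u`. -/
def IsSubalg (u : G) (N : Set G) : Prop :=
  N ⊆ Set.Icc 0 u ∧ 0 ∈ N ∧ u ∈ N ∧
    (∀ x ∈ N, ∀ y ∈ N, oplus u x y ∈ N) ∧
    (∀ x ∈ N, u - x ∈ N) ∧ (∀ x ∈ N, -x + u ∈ N)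

/-- `N` is a large subalgebra of `Γ(G,u)`: for every nonzero `y ∈ Γ(G,u)` there
are `n ∈ ℕ` and a nonzero `x ∈ N` with `x ≤ n.y`. -/
def IsLargeSubalg (u : G) (N : Set G) : Prop :=
  IsSubalg u N ∧ ∀ y ∈ Set.Icc (0 : G) u, y ≠ 0 →
    ∃ n : ℕ, ∃ x ∈ N, x ≠ 0 ∧ x ≤ nOplus u n y

/-!
Write `M = A ⊞ J`. Since `A ∩ J = {0}`, every element of `A` is disjoint from every
element of `J`; disjoint elements of an ℓ-group commute and satisfy `a + b = a ⊔ b`, so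
`a ⊕ j = a ⊔ j`. With the associativity of `⊕` on `Γ(G,u)` it follows that `A ⊕ J` is a
normal ideal; it contains `A ∪ J`, hence is all of `Γ(G,u)`, which gives `x = a ⊕ j` with
`j ∈ J ⊆ A^⊥`.
Uniqueness: `a ⊔ b = a' ⊔ b'` forces `a = a'` and `b = b'` when `a, a' ⊥ b, b'`, by the
distributive law `y ⊓ (a ⊔ b) = y ⊓ a ⊔ y ⊓ b` for disjoint `a, b`.
-/

open Set

section Ideals

variable {L : Type*} [Lattice L] [AddGroup L] {u a b y : L} {I J : Set L}

theorem oplus_zero (ha : a ≤ u) : oplus u a 0 = a := by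
  rw [oplus, add_zero, inf_eq_left.2 ha]

theorem zero_oplus (ha : a ≤ u) : oplus u 0 a = a := by
  rw [oplus, zero_add, inf_eq_left.2 ha]

theorem IsIdealIn.zero_mem (hI : IsIdealIn u (Icc 0 u) I) : (0 : L) ∈ I := by
  obtain ⟨a, ha⟩ := hI.2.1
  exact hI.2.2.1 a ha 0 ⟨le_rfl, (hI.1 ha).1.trans (hI.1 ha).2⟩ (hI.1 ha).1

theorem IsIdealIn.inf_mem_left (hI : IsIdealIn u (Icc 0 u) I) (hy : y ∈ Icc 0 u) (ha : a ∈ I) :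
    y ⊓ a ∈ I :=
  hI.2.2.1 a ha _ ⟨le_inf hy.1 (hI.1 ha).1, inf_le_right.trans (hI.1 ha).2⟩ inf_le_right

theorem inf_eq_zero_of_inter_eq_singleton_zero (hI : IsIdealIn u (Icc 0 u) I)
    (hJ : IsIdealIn u (Icc 0 u) J) (hIJ : I ∩ J = {0}) (ha : a ∈ I) (hb : b ∈ J) :
    a ⊓ b = 0 := by
  have hab : a ⊓ b ∈ I ∩ J :=
    ⟨inf_comm b a ▸ hI.inf_mem_left (hJ.1 hb) ha, hJ.inf_mem_left (hI.1 ha) hb⟩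
  rwa [hIJ] at hab

theorem subset_polarIn_of_inter_eq_singleton_zero (hI : IsIdealIn u (Icc 0 u) I)
    (hJ : IsIdealIn u (Icc 0 u) J) (hIJ : I ∩ J = {0}) : J ⊆ polarIn (Icc 0 u) I :=
  fun _ hb => ⟨hJ.1 hb, fun _ ha => by
    rw [inf_comm]; exact inf_eq_zero_of_inter_eq_singleton_zero hI hJ hIJ ha hb⟩

theorem union_subset_setOplus (hI : IsIdealIn u (Icc 0 u) I) (hJ : IsIdealIn u (Icc 0 u) J) :
    I ∪ J ⊆ setOplus u I J := by
  rintro z (hz | hz)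
  · exact ⟨z, hz, 0, hJ.zero_mem, oplus_zero (hI.1 hz).2⟩
  · exact ⟨0, hI.zero_mem, z, hz, zero_oplus (hJ.1 hz).2⟩

end Ideals

section LatticeOrderedGroup

variable {a b a' b' y : G}

theorem add_eq_sup_of_inf_eq_zero (h : a ⊓ b = 0) : a + b = a ⊔ b := by
  have key : a + -(a ⊓ b) + b = b ⊔ a := by
    rw [neg_inf, add_sup, sup_add]; simp
  rwa [h, neg_zero, add_zero, sup_comm] at key

theorem add_comm_of_inf_eq_zero (h : a ⊓ b = 0) : a + b = b + a := by
  rw [add_eq_sup_of_inf_eq_zero h, add_eq_sup_of_inf_eq_zero (inf_comm b a ▸ h), sup_comm]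

theorem inf_sup_left_of_inf_eq_zero (hy : 0 ≤ y) (hab : a ⊓ b = 0) :
    y ⊓ (a ⊔ b) = y ⊓ a ⊔ y ⊓ b := by
  refine le_antisymm ?_ (sup_le (inf_le_inf_left _ le_sup_left) (inf_le_inf_left _ le_sup_right))
  set z := y ⊓ (a ⊔ b)
  have ha : 0 ≤ a := hab ▸ inf_le_left
  have hb : 0 ≤ b := hab ▸ inf_le_right
  have hz : 0 ≤ z := le_inf hy (ha.trans le_sup_left)
  -- `z = z ⊓ a + (z - a)⁺`, and the positive part `(z - a)⁺` lies below `z ⊓ b`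
  have hsplit : z = z ⊓ a + (0 ⊔ (-a + z)) := by
    rw [← neg_add_cancel z, ← sup_add, ← neg_inf, add_neg_cancel_left]
  have hrest : 0 ⊔ (-a + z) ≤ z ⊓ b := by
    refine le_inf (sup_le hz ?_) (sup_le hb ?_)
    · simpa using add_le_add_left (neg_nonpos.2 ha) z
    · have hzab : z ≤ a + b := add_eq_sup_of_inf_eq_zero hab ▸ inf_le_right
      simpa using add_le_add_right hzab (-a)
  have hdisj : z ⊓ a ⊓ (z ⊓ b) = 0 :=
    le_antisymm ((inf_le_inf inf_le_right inf_le_right).trans hab.le)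
      (le_inf (le_inf hz ha) (le_inf hz hb))
  calc z = z ⊓ a + (0 ⊔ (-a + z)) := hsplit
    _ ≤ z ⊓ a + z ⊓ b := add_le_add_right hrest _
    _ = z ⊓ a ⊔ z ⊓ b := add_eq_sup_of_inf_eq_zero hdisj
    _ ≤ y ⊓ a ⊔ y ⊓ b :=
      sup_le_sup (inf_le_inf_right _ inf_le_left) (inf_le_inf_right _ inf_le_left)

theorem le_of_le_sup_of_inf_eq_zero (hy : 0 ≤ y) (hyab : y ≤ a ⊔ b) (hab : a ⊓ b = 0)
    (hyb : y ⊓ b = 0) : y ≤ a :=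
  calc y = y ⊓ (a ⊔ b) := (inf_eq_left.2 hyab).symm
    _ = y ⊓ a := by
      rw [inf_sup_left_of_inf_eq_zero hy hab, hyb, sup_eq_left.2 (le_inf hy (hab ▸ inf_le_left))]
    _ ≤ a := inf_le_right

theorem eq_of_sup_eq_sup_of_inf_eq_zero (h : a ⊔ b = a' ⊔ b') (hab : a ⊓ b = 0)
    (ha'b' : a' ⊓ b' = 0) (hab' : a ⊓ b' = 0) (ha'b : a' ⊓ b = 0) : a = a' ∧ b = b' := by
  have ha : 0 ≤ a := hab ▸ inf_le_left
  have ha' : 0 ≤ a' := ha'b' ▸ inf_le_left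
  have hb : 0 ≤ b := hab ▸ inf_le_right
  have hb' : 0 ≤ b' := ha'b' ▸ inf_le_right
  refine ⟨le_antisymm ?_ ?_, le_antisymm ?_ ?_⟩
  · exact le_of_le_sup_of_inf_eq_zero ha (h ▸ le_sup_left) ha'b' hab'
  · exact le_of_le_sup_of_inf_eq_zero ha' (h.symm ▸ le_sup_left) hab ha'b
  · rw [inf_comm] at ha'b' ha'b
    exact le_of_le_sup_of_inf_eq_zero hb (by rw [sup_comm, ← h]; exact le_sup_right) ha'b' ha'b
  · rw [inf_comm] at hab hab'
    exact le_of_le_sup_of_inf_eq_zero hb' (by rw [sup_comm, h]; exact le_sup_right) hab hab'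

end LatticeOrderedGroup

section Gamma

variable {u a b a' b' x y z z' : G} {I J : Set G}

theorem oplus_assoc (hx : 0 ≤ x) (hz : 0 ≤ z) :
    oplus u (oplus u x y) z = oplus u x (oplus u y z) := by
  simp only [oplus]
  rw [inf_add, inf_assoc, inf_eq_right.2 (le_add_of_nonneg_right hz), add_inf, inf_assoc,
    inf_eq_right.2 (le_add_of_nonneg_left hx), add_assoc]

theorem oplus_comm_of_inf_eq_zero (hab : a ⊓ b = 0) : oplus u a b = oplus u b a := by
  rw [oplus, oplus, add_comm_of_inf_eq_zero hab]

theorem oplus_eq_sup_of_inf_eq_zero (hab : a ⊓ b = 0) (ha : a ≤ u) (hb : b ≤ u) :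
    oplus u a b = a ⊔ b := by
  rw [oplus, add_eq_sup_of_inf_eq_zero hab, inf_eq_left.2 (sup_le ha hb)]

theorem eq_of_oplus_eq_oplus_of_mem_polarIn (hI : I ⊆ Icc 0 u) (ha : a ∈ I)
    (hb : b ∈ polarIn (Icc 0 u) I) (ha' : a' ∈ I) (hb' : b' ∈ polarIn (Icc 0 u) I)
    (h : oplus u a b = oplus u a' b') : a = a' ∧ b = b' := by
  have hab : a ⊓ b = 0 := inf_comm b a ▸ hb.2 a ha
  have ha'b' : a' ⊓ b' = 0 := inf_comm b' a' ▸ hb'.2 a' ha'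
  rw [oplus_eq_sup_of_inf_eq_zero hab (hI ha).2 hb.1.2,
    oplus_eq_sup_of_inf_eq_zero ha'b' (hI ha').2 hb'.1.2] at h
  exact eq_of_sup_eq_sup_of_inf_eq_zero h hab ha'b' (inf_comm b' a ▸ hb'.2 a ha)
    (inf_comm b a' ▸ hb.2 a' ha')

theorem image_oplus_left_setOplus_subset (hx : 0 ≤ x) (hI₀ : ∀ a ∈ I, 0 ≤ a)
    (hJ₀ : ∀ b ∈ J, 0 ≤ b) (hI : (fun i => oplus u x i) '' I ⊆ (fun i => oplus u i x) '' I)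
    (hJ : (fun i => oplus u x i) '' J ⊆ (fun i => oplus u i x) '' J) :
    (fun i => oplus u x i) '' setOplus u I J ⊆ (fun i => oplus u i x) '' setOplus u I J := by
  rintro _ ⟨_, ⟨a, ha, b, hb, rfl⟩, rfl⟩
  obtain ⟨a', ha', hax : oplus u a' x = oplus u x a⟩ := hI ⟨a, ha, rfl⟩
  obtain ⟨b', hb', hbx : oplus u b' x = oplus u x b⟩ := hJ ⟨b, hb, rfl⟩
  refine ⟨oplus u a' b', ⟨a', ha', b', hb', rfl⟩, ?_⟩
  calc oplus u (oplus u a' b') x = oplus u a' (oplus u x b) := by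
        rw [oplus_assoc (hI₀ a' ha') hx, hbx]
    _ = oplus u x (oplus u a b) := by
        rw [← oplus_assoc (hI₀ a' ha') (hJ₀ b hb), hax, oplus_assoc hx (hJ₀ b hb)]

theorem image_oplus_right_setOplus_subset (hx : 0 ≤ x) (hI₀ : ∀ a ∈ I, 0 ≤ a)
    (hJ₀ : ∀ b ∈ J, 0 ≤ b) (hI : (fun i => oplus u i x) '' I ⊆ (fun i => oplus u x i) '' I)
    (hJ : (fun i => oplus u i x) '' J ⊆ (fun i => oplus u x i) '' J) :
    (fun i => oplus u i x) '' setOplus u I J ⊆ (fun i => oplus u x i) '' setOplus u I J := by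
  rintro _ ⟨_, ⟨a, ha, b, hb, rfl⟩, rfl⟩
  obtain ⟨a', ha', hax : oplus u x a' = oplus u a x⟩ := hI ⟨a, ha, rfl⟩
  obtain ⟨b', hb', hbx : oplus u x b' = oplus u b x⟩ := hJ ⟨b, hb, rfl⟩
  refine ⟨oplus u a' b', ⟨a', ha', b', hb', rfl⟩, ?_⟩
  calc oplus u x (oplus u a' b') = oplus u a (oplus u x b') := by
        rw [← oplus_assoc hx (hJ₀ b' hb'), hax, oplus_assoc (hI₀ a ha) (hJ₀ b' hb')]
    _ = oplus u (oplus u a b) x := by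
        rw [hbx, oplus_assoc (hI₀ a ha) hx]

theorem mem_setOplus_of_le (hI : IsIdealIn u (Icc 0 u) I) (hJ : IsIdealIn u (Icc 0 u) J)
    (hdisj : ∀ a ∈ I, ∀ b ∈ J, a ⊓ b = 0) (hz : z ∈ setOplus u I J) (hy : y ∈ Icc 0 u)
    (hyz : y ≤ z) : y ∈ setOplus u I J := by
  obtain ⟨a, ha, b, hb, rfl⟩ := hz
  have hya := hI.inf_mem_left hy ha
  have hyb := hJ.inf_mem_left hy hb
  refine ⟨y ⊓ a, hya, y ⊓ b, hyb, ?_⟩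
  have hab := hdisj a ha b hb
  rw [oplus_eq_sup_of_inf_eq_zero hab (hI.1 ha).2 (hJ.1 hb).2] at hyz
  rw [oplus_eq_sup_of_inf_eq_zero (hdisj _ hya _ hyb) (hI.1 hya).2 (hJ.1 hyb).2,
    ← inf_sup_left_of_inf_eq_zero hy.1 hab, inf_eq_left.2 hyz]

theorem oplus_mem_setOplus (hI : IsIdealIn u (Icc 0 u) I) (hJ : IsIdealIn u (Icc 0 u) J)
    (hdisj : ∀ a ∈ I, ∀ b ∈ J, a ⊓ b = 0) (hz : z ∈ setOplus u I J)
    (hz' : z' ∈ setOplus u I J) : oplus u z z' ∈ setOplus u I J := by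
  obtain ⟨a, ha, b, hb, rfl⟩ := hz
  obtain ⟨a', ha', b', hb', rfl⟩ := hz'
  refine ⟨oplus u a a', hI.2.2.2 a ha a' ha', oplus u b b', hJ.2.2.2 b hb b' hb', ?_⟩
  have ha₀ := (hI.1 ha).1
  have hb₀ := (hJ.1 hb).1
  have hb'₀ := (hJ.1 hb').1
  have hab₀ : 0 ≤ oplus u a b := le_inf (add_nonneg ha₀ hb₀) (ha₀.trans (hI.1 ha).2)
  calc oplus u (oplus u a a') (oplus u b b')
      = oplus u (oplus u a (oplus u a' b)) b' := by
        rw [← oplus_assoc (hI.1 (hI.2.2.2 a ha a' ha')).1 hb'₀, oplus_assoc ha₀ hb₀]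
    _ = oplus u (oplus u a (oplus u b a')) b' := by
        rw [oplus_comm_of_inf_eq_zero (hdisj a' ha' b hb)]
    _ = oplus u (oplus u a b) (oplus u a' b') := by
        rw [← oplus_assoc ha₀ (hI.1 ha').1, oplus_assoc hab₀ hb'₀]

theorem IsNormalIdealIn.setOplus (hI : IsNormalIdealIn u (Icc 0 u) I)
    (hJ : IsNormalIdealIn u (Icc 0 u) J) (hIJ : I ∩ J = {0}) :
    IsNormalIdealIn u (Icc 0 u) (setOplus u I J) := by
  have hdisj : ∀ a ∈ I, ∀ b ∈ J, a ⊓ b = 0 := fun a ha b hb =>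
    inf_eq_zero_of_inter_eq_singleton_zero hI.1 hJ.1 hIJ ha hb
  have hI₀ : ∀ a ∈ I, 0 ≤ a := fun a ha => (hI.1.1 ha).1
  have hJ₀ : ∀ b ∈ J, 0 ≤ b := fun b hb => (hJ.1.1 hb).1
  refine ⟨⟨?_, ⟨0, union_subset_setOplus hI.1 hJ.1 (Or.inl hI.1.zero_mem)⟩,
    fun z hz y hy hyz => mem_setOplus_of_le hI.1 hJ.1 hdisj hz hy hyz,
    fun z hz z' hz' => oplus_mem_setOplus hI.1 hJ.1 hdisj hz hz'⟩, fun x hx => ?_⟩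
  · rintro _ ⟨a, ha, b, hb, rfl⟩
    rw [oplus_eq_sup_of_inf_eq_zero (hdisj a ha b hb) (hI.1.1 ha).2 (hJ.1.1 hb).2]
    exact ⟨(hI₀ a ha).trans le_sup_left, sup_le (hI.1.1 ha).2 (hJ.1.1 hb).2⟩
  · exact (image_oplus_left_setOplus_subset hx.1 hI₀ hJ₀ (hI.2 x hx).subset
      (hJ.2 x hx).subset).antisymm
      (image_oplus_right_setOplus_subset hx.1 hI₀ hJ₀ (hI.2 x hx).symm.subset
        (hJ.2 x hx).symm.subset)

end Gamma

theorem stmt7_general (u : G) (A : Set G)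
    (hA : IsSummandIdealIn u (Set.Icc (0 : G) u) A) :
    ∀ x ∈ Set.Icc (0 : G) u, ∃! p : G × G,
      p.1 ∈ A ∧ p.2 ∈ polarIn (Set.Icc (0 : G) u) A ∧ x = oplus u p.1 p.2 := by
  obtain ⟨hAn, J, hJn, hAJ, hgen⟩ := hA
  intro x hx
  rw [← hgen] at hx
  obtain ⟨a, ha, b, hb, rfl⟩ : x ∈ setOplus u A J :=
    mem_sInter.1 hx _ ⟨hAn.setOplus hJn hAJ, union_subset_setOplus hAn.1 hJn.1⟩
  have hpolar := subset_polarIn_of_inter_eq_singleton_zero hAn.1 hJn.1 hAJ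
  refine ⟨(a, b), ⟨ha, hpolar hb, rfl⟩, fun p ⟨hp₁, hp₂, hp⟩ => ?_⟩
  obtain ⟨h₁, h₂⟩ :=
    eq_of_oplus_eq_oplus_of_mem_polarIn hAn.1.1 hp₁ hp₂ ha (hpolar hb) hp.symm
  exact Prod.ext h₁ h₂

theorem stmt7 (u : G) (hu : IsStrongUnit u) (A : Set G)
    (hA : IsSummandIdealIn u (Set.Icc (0 : G) u) A) :
    ∀ x ∈ Set.Icc (0 : G) u, ∃! p : G × G,
      p.1 ∈ A ∧ p.2 ∈ polarIn (Set.Icc (0 : G) u) A ∧ x = oplus u p.1 p.2 :=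
  stmt7_general u A hA
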